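/- Let t be a complex number with t ≠ 0 and t ≠ -1, and set a := (t+1)/2 and b := (t^{-1}+1)/2 (both nonzero). Then for every integer n: h_{1,n}(a) + h_{1,n}(b) = (n-1)²/2, and h_{2,n}(a) + h_{2,n}(b) = 3(t-1)²/(8t) + (n-2)²/2. -/

import Mathlib

/-!
With `a = (t+1)/2` and `b = (t⁻¹+1)/2` one has `a⁻¹ + b⁻¹ = 2/(t+1) + 2t/(t+1) = 2`, so the
`ℓ⁻¹`-terms of `h_{r,s}(a) + h_{r,s}(b)` collapse to the constant `(s²-1)/2`. For `r = 1` the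
`ℓ`-terms vanish, leaving `(s-1)²/2`; for `r = 2` they contribute `(3/4)(a+b) = 3(t+1)²/(8t)`,
which exceeds `3(t-1)²/(8t)` by exactly the remaining `3/2`.
-/

/-- The Virasoro conformal weight
`h_{r,s}(ℓ) = ((r²-1)/4)·ℓ - (rs-1)/2 + ((s²-1)/4)·ℓ⁻¹`. -/
noncomputable def hvir (ℓ : ℂ) (r s : ℤ) : ℂ :=
  ((r : ℂ) ^ 2 - 1) / 4 * ℓ - ((r : ℂ) * (s : ℂ) - 1) / 2 + ((s : ℂ) ^ 2 - 1) / 4 * ℓ⁻¹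

theorem hvir_add_hvir_of_inv_add_inv_eq_two {ℓ m : ℂ} (h : ℓ⁻¹ + m⁻¹ = 2) (r s : ℤ) :
    hvir ℓ r s + hvir m r s
      = ((r : ℂ) ^ 2 - 1) / 4 * (ℓ + m) - ((r : ℂ) * s - 1) + ((s : ℂ) ^ 2 - 1) / 2 := by
  unfold hvir
  linear_combination ((s : ℂ) ^ 2 - 1) / 4 * h

theorem inv_half_add_one_add_inv_half_inv_add_one {t : ℂ} (ht0 : t ≠ 0) (ht1 : t + 1 ≠ 0) :
    ((t + 1) / 2)⁻¹ + ((t⁻¹ + 1) / 2)⁻¹ = 2 := by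
  have h1t : 1 + t ≠ 0 := by rwa [add_comm]
  field_simp
  ring

/-- For `t ≠ 0, -1` and `a = (t+1)/2`, `b = (t⁻¹+1)/2`, for every integer `n`:
`h_{1,n}(a) + h_{1,n}(b) = (n-1)²/2` and
`h_{2,n}(a) + h_{2,n}(b) = 3(t-1)²/(8t) + (n-2)²/2`. -/
theorem conformal_weight_matching (t : ℂ) (ht0 : t ≠ 0) (htm1 : t ≠ -1) :
    ((t + 1) / 2 ≠ 0 ∧ (t⁻¹ + 1) / 2 ≠ 0) ∧
    ∀ n : ℤ,
      hvir ((t + 1) / 2) 1 n + hvir ((t⁻¹ + 1) / 2) 1 n = ((n : ℂ) - 1) ^ 2 / 2 ∧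
      hvir ((t + 1) / 2) 2 n + hvir ((t⁻¹ + 1) / 2) 2 n
        = 3 * (t - 1) ^ 2 / (8 * t) + ((n : ℂ) - 2) ^ 2 / 2 := by
  have ht1 : t + 1 ≠ 0 := fun h => htm1 (eq_neg_of_add_eq_zero_left h)
  have hinv1 : t⁻¹ + 1 ≠ 0 := fun h =>
    htm1 (by rw [inv_eq_iff_eq_inv.mp (eq_neg_of_add_eq_zero_left h), inv_neg_one])
  have hsum := inv_half_add_one_add_inv_half_inv_add_one ht0 ht1
  refine ⟨⟨div_ne_zero ht1 two_ne_zero, div_ne_zero hinv1 two_ne_zero⟩, fun n => ⟨?_, ?_⟩⟩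
  · rw [hvir_add_hvir_of_inv_add_inv_eq_two hsum]
    push_cast
    ring
  · rw [hvir_add_hvir_of_inv_add_inv_eq_two hsum]
    push_cast
    field_simp
    ring
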